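/- Let k be a field of characteristic zero, n ≥ 2, and consider f = (f_1,...,f_n) = (X_1,...,X_{n-2}, X_{n-1}², X_n²) in k[[X_1,...,X_n]], generating the ideal I. Then the Jacobian J_X(f) = 4·X_{n-1}·X_n belongs to the integral closure of I, the integral closure of I equals (X_1,...,X_{n-2}, X_{n-1}², X_{n-1}X_n, X_n²), but for no rational θ > 1 does J_X(f)^q belong to the integral closure of I^p where θ = p/q. -/

import Mathlib

/-!
Write `a, b` for the last two variables and give `X_a`, `X_b` weight 1 and every other variable
weight 2. Then all generators of `I` are weighted-homogeneous of degree 2, and since the weighted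
order is a valuation on `k[[X]]`, an integral equation over `I ^ p` forces weighted order at least
`2p`. The Jacobian `4 X_a X_b` has weighted order 2, so `J ^ q` (of order `2q`) is not integral over
`I ^ p` for `q < p`. For `p = 1` the bound puts the integral closure of `I` inside the series of
weighted order at least 2, which form the monomial ideal `(X_i, X_a², X_a X_b, X_b²)`; conversely
`X_a X_b` is integral over `I` because its square `X_a² X_b²` lies in `I²`.
-/

/-- The formal partial derivative `∂f/∂X_j` of a multivariate formal power series. -/
noncomputable def psDeriv {A : Type*} [CommRing A] {n : ℕ} (j : Fin n)
    (f : MvPowerSeries (Fin n) A) : MvPowerSeries (Fin n) A :=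
  fun m => (m j + 1 : ℕ) * MvPowerSeries.coeff (m + Finsupp.single j 1) f

/-- The Jacobian `J_X(f) = det (∂f_i/∂X_j)` of `n` formal power series in `n` variables. -/
noncomputable def jacobianPS {A : Type*} [CommRing A] {n : ℕ}
    (f : Fin n → MvPowerSeries (Fin n) A) : MvPowerSeries (Fin n) A :=
  Matrix.det (Matrix.of fun i j => psDeriv j (f i))

/-- `x` is integral over the ideal `I`: it satisfies a relation
`x^k + a_1 x^{k-1} + ⋯ + a_k = 0` with `a_i ∈ I^i`. -/
def MemIntClosure {R : Type*} [CommRing R] (I : Ideal R) (x : R) : Prop :=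
  ∃ (k : ℕ) (a : Fin k → R), 0 < k ∧ (∀ i : Fin k, a i ∈ I ^ ((i : ℕ) + 1)) ∧
    x ^ k + ∑ i : Fin k, a i * x ^ (k - ((i : ℕ) + 1)) = 0

theorem memIntClosure_add_of_sq_mem {R : Type*} [CommRing R] {I : Ideal R} {y z : R}
    (hy : y ∈ I) (hz : z ^ 2 ∈ I ^ 2) : MemIntClosure I (y + z) := by
  -- `t = y + z` is a root of `(t - y) ^ 2 - z ^ 2`
  refine ⟨2, ![-(2 * y), y ^ 2 - z ^ 2], two_pos, fun i => ?_, ?_⟩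
  · fin_cases i
    · simpa using I.neg_mem (I.mul_mem_left 2 hy)
    · simpa using sub_mem (Ideal.pow_mem_pow hy 2) hz
  · simp only [Fin.sum_univ_two]
    norm_num
    ring

section Jacobian

open MvPowerSeries

variable {R : Type*} [CommRing R]

theorem psDeriv_eq_pderiv {n : ℕ} (j : Fin n) (f : MvPowerSeries (Fin n) R) :
    psDeriv j f = pderiv R j f := by
  ext d
  rw [coeff_pderiv, mul_comm]
  change ((d j + 1 : ℕ) : R) * _ = _
  push_cast
  rfl

theorem jacobianPS_X_pow {n : ℕ} (e : Fin n → ℕ) :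
    jacobianPS (fun i => (X i : MvPowerSeries (Fin n) R) ^ e i) =
      ∏ i, (e i : MvPowerSeries (Fin n) R) * X i ^ (e i - 1) := by
  rw [jacobianPS, ← Matrix.det_diagonal]
  congr 1
  ext i j
  rw [Matrix.of_apply, psDeriv_eq_pderiv, pderiv_pow]
  rcases eq_or_ne i j with rfl | hij
  · simp
  · simp [pderiv_X_of_ne hij, Matrix.diagonal_apply_ne _ hij]

end Jacobian

namespace MvPowerSeries

open Finsupp

variable {σ R : Type*}

theorem weightedOrder_pow [CommRing R] [IsDomain R] (w : σ → ℕ) (f : MvPowerSeries σ R) (m : ℕ) :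
    (f ^ m).weightedOrder w = m * f.weightedOrder w := by
  induction m with
  | zero => simp
  | succ m ih => rw [pow_succ, weightedOrder_mul, ih]; push_cast; ring

section WeightedOrderIdeal

variable [CommRing R] (w : σ → ℕ)

def weightedOrderIdeal (c : ℕ) : Ideal (MvPowerSeries σ R) where
  carrier := {f | (c : ℕ∞) ≤ f.weightedOrder w}
  add_mem' hf hg := (le_min hf hg).trans (min_weightedOrder_le_add w)
  zero_mem' := by simp
  smul_mem' r _ hf := le_add_left hf |>.trans (le_weightedOrder_mul w)

variable {w}

theorem mem_weightedOrderIdeal {c : ℕ} {f : MvPowerSeries σ R} :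
    f ∈ weightedOrderIdeal w c ↔ (c : ℕ∞) ≤ f.weightedOrder w := Iff.rfl

theorem weightedOrderIdeal_antitone {c c' : ℕ} (h : c' ≤ c) :
    weightedOrderIdeal (R := R) w c ≤ weightedOrderIdeal w c' :=
  fun _ hf => (Nat.cast_le.mpr h).trans (mem_weightedOrderIdeal.mp hf)

theorem weightedOrderIdeal_zero : weightedOrderIdeal (R := R) w 0 = ⊤ :=
  eq_top_iff.mpr fun _ _ => by simp [mem_weightedOrderIdeal]

theorem weightedOrderIdeal_mul_le (c c' : ℕ) :
    weightedOrderIdeal (R := R) w c * weightedOrderIdeal w c' ≤ weightedOrderIdeal w (c + c') :=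
  Ideal.mul_le.mpr fun _ hf _ hg => by
    rw [mem_weightedOrderIdeal, Nat.cast_add]
    exact (add_le_add hf hg).trans (le_weightedOrder_mul w)

theorem pow_le_weightedOrderIdeal {I : Ideal (MvPowerSeries σ R)} {c : ℕ}
    (hI : I ≤ weightedOrderIdeal w c) (m : ℕ) : I ^ m ≤ weightedOrderIdeal w (c * m) := by
  induction m with
  | zero => simp [weightedOrderIdeal_zero]
  | succ m ih => rw [pow_succ]; exact (Ideal.mul_mono ih hI).trans (weightedOrderIdeal_mul_le _ _)

theorem span_X_pow_le_weightedOrderIdeal [Nontrivial R] (e : σ → ℕ) {c : ℕ}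
    (he : ∀ i, e i * w i = c) :
    Ideal.span (Set.range fun i => (X i : MvPowerSeries σ R) ^ e i) ≤ weightedOrderIdeal w c := by
  rw [Ideal.span_le]
  rintro _ ⟨i, rfl⟩
  simp [mem_weightedOrderIdeal, X_pow_eq, weightedOrder_monomial_of_ne_zero, weight_single, he]

theorem le_weightedOrder_of_memIntClosure [IsDomain R] {I : Ideal (MvPowerSeries σ R)} {c : ℕ}
    (hI : I ≤ weightedOrderIdeal w c) {x : MvPowerSeries σ R} (hx : MemIntClosure I x) :
    (c : ℕ∞) ≤ x.weightedOrder w := by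
  obtain ⟨K, a, -, ha, hsum⟩ := hx
  by_contra! hlt
  obtain ⟨e, he⟩ := ENat.ne_top_iff_exists.mp (hlt.trans_le le_top).ne
  have hec : e < c := by rw [← he] at hlt; exact_mod_cast hlt
  have hpow : ∀ m, (x ^ m).weightedOrder w = (e * m : ℕ) := by
    intro m; rw [weightedOrder_pow, ← he]; push_cast; ring
  -- each term `a i * x ^ (K - (i + 1))` of the relation has order `> e * K`
  have hxK : x ^ K ∈ weightedOrderIdeal w (e * K + 1) := by
    rw [eq_neg_of_add_eq_zero_left hsum]
    refine neg_mem (Ideal.sum_mem _ fun i _ => ?_)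
    have hxi : x ^ (K - (i + 1)) ∈ weightedOrderIdeal (R := R) w (e * (K - (i + 1))) :=
      (hpow _).ge
    refine weightedOrderIdeal_antitone ?_ (weightedOrderIdeal_mul_le _ _
      (Ideal.mul_mem_mul (pow_le_weightedOrderIdeal hI _ (ha i)) hxi))
    have hK : e * K = e * (i + 1) + e * (K - (i + 1)) := by rw [← mul_add]; congr 1; omega
    rw [hK]
    nlinarith [Nat.mul_le_mul_right (i + 1) hec]
  rw [mem_weightedOrderIdeal, hpow, Nat.cast_le] at hxK
  omega

end WeightedOrderIdeal

theorem mem_span_monomial_of_forall_exists_le [CommSemiring R] (s : Finset (σ →₀ ℕ))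
    {f : MvPowerSeries σ R} (hf : ∀ d, coeff d f ≠ 0 → ∃ e ∈ s, e ≤ d) :
    f ∈ Ideal.span ((fun e => monomial e (1 : R)) '' s) := by
  classical
  -- split the support of `f` among the monomials `e ∈ s`, each `d` going to a chosen `e ≤ d`
  let sel : (σ →₀ ℕ) → Option (σ →₀ ℕ) := fun d =>
    if h : ∃ e ∈ s, e ≤ d then some h.choose else none
  have sel_spec : ∀ {d e}, sel d = some e → e ∈ s ∧ e ≤ d := by
    intro d e h
    simp only [sel] at h
    split_ifs at h with hd
    cases h
    exact hd.choose_spec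
  let g : (σ →₀ ℕ) → MvPowerSeries σ R := fun e m =>
    if sel (m + e) = some e then coeff (m + e) f else 0
  have hfg : f = ∑ e ∈ s, monomial e 1 * g e := by
    ext d
    have hterm : ∀ e ∈ s, coeff d (monomial e 1 * g e) = if sel d = some e then coeff d f else 0 := by
      intro e _
      rw [coeff_monomial_mul, one_mul]
      split_ifs with hle hsel hsel
      · change ite _ _ _ = _
        rw [tsub_add_cancel_of_le hle, if_pos hsel]
      · change ite _ _ _ = _
        rw [tsub_add_cancel_of_le hle, if_neg hsel]
      · exact absurd (sel_spec hsel).2 hle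
      · rfl
    rw [map_sum, Finset.sum_congr rfl hterm]
    rcases hd : sel d with _ | e
    · simp only [reduceCtorEq, if_false, Finset.sum_const_zero]
      by_contra hne
      simp [sel, hf d hne] at hd
    · simp [(sel_spec hd).1]
  rw [hfg]
  exact Ideal.sum_mem _ fun e he => Ideal.mul_mem_right _ _ (Ideal.subset_span ⟨e, he, rfl⟩)

end MvPowerSeries

namespace SquaredPair

open MvPowerSeries Finsupp

variable {σ : Type*} [DecidableEq σ] (a b : σ)

def exponent (i : σ) : ℕ := if i = a ∨ i = b then 2 else 1

def weights (i : σ) : ℕ := if i = a ∨ i = b then 1 else 2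

theorem exponent_mul_weights (i : σ) : exponent a b i * weights a b i = 2 := by
  unfold exponent weights
  split_ifs <;> rfl

noncomputable def closureExponents [Fintype σ] : Finset (σ →₀ ℕ) :=
  ({a, b}ᶜ : Finset σ).image (single · 1) ∪ {single a 2, single a 1 + single b 1, single b 2}

variable {a b}

theorem exists_closureExponents_le [Fintype σ] (hab : a ≠ b) {d : σ →₀ ℕ}
    (hd : 2 ≤ weight (weights a b) d) : ∃ e ∈ closureExponents a b, e ≤ d := by
  by_contra! h
  have hlow : ∀ i, i ≠ a ∧ i ≠ b → d i = 0 := fun i hi => by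
    simpa [single_le_iff] using h (single i 1) (by simp [closureExponents]; grind)
  have ha : d a ≤ 1 := by simpa [single_le_iff] using h (single a 2) (by simp [closureExponents])
  have hb : d b ≤ 1 := by simpa [single_le_iff] using h (single b 2) (by simp [closureExponents])
  have hmixed : d a = 0 ∨ d b = 0 := by
    by_contra! hpos
    refine h (single a 1 + single b 1) (by simp [closureExponents]) fun i => ?_
    simp only [coe_add, Pi.add_apply, single_apply]
    split_ifs <;> grind
  rw [weight_eq_sum, Fintype.sum_eq_add a b hab fun i hi => by simp [hlow i hi]] at hd
  simp [weights] at hd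
  omega

section Ideals

variable {R : Type*} [CommRing R]

theorem memIntClosure_of_mem_span {x : MvPowerSeries σ R}
    (hx : x ∈ Ideal.span (X '' ({a, b}ᶜ : Set σ) ∪ {X a ^ 2, X a * X b, X b ^ 2})) :
    MemIntClosure (Ideal.span (Set.range fun i => (X i : MvPowerSeries σ R) ^ exponent a b i))
      x := by
  set I := Ideal.span (Set.range fun i => (X i : MvPowerSeries σ R) ^ exponent a b i)
  have hXa : X a ^ 2 ∈ I := Ideal.subset_span ⟨a, by simp [exponent]⟩
  have hXb : X b ^ 2 ∈ I := Ideal.subset_span ⟨b, by simp [exponent]⟩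
  rw [Set.union_insert, Set.union_insert, Set.insert_comm, Ideal.span, Submodule.mem_span_insert]
    at hx
  obtain ⟨r, y, hy, rfl⟩ := hx
  have hyI : y ∈ I := by
    refine Submodule.span_le.mpr ?_ hy
    rintro _ (rfl | (⟨i, hi, rfl⟩ | rfl))
    · exact hXa
    · refine Ideal.subset_span ⟨i, ?_⟩
      simp only [Set.mem_compl_iff, Set.mem_insert_iff, Set.mem_singleton_iff] at hi
      simp [exponent, hi]
    · exact hXb
  rw [add_comm]
  refine memIntClosure_add_of_sq_mem hyI ?_
  rw [smul_eq_mul, show (r * (X a * X b)) ^ 2 = r ^ 2 * (X a ^ 2 * X b ^ 2) by ring, pow_two I]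
  exact Ideal.mul_mem_left _ _ (Ideal.mul_mem_mul hXa hXb)

theorem not_memIntClosure_pow {K : Type*} [Field K] [NeZero (2 : K)] {p q : ℕ}
    (hqp : q < p) :
    ¬ MemIntClosure
        (Ideal.span (Set.range fun i => (X i : MvPowerSeries σ K) ^ exponent a b i) ^ p)
        ((4 * (X a * X b)) ^ q) := by
  intro h
  have hord := le_weightedOrder_of_memIntClosure (pow_le_weightedOrderIdeal
    (span_X_pow_le_weightedOrderIdeal _ (exponent_mul_weights a b)) p) h
  have h4 : (4 : MvPowerSeries σ K) * (X a * X b) = monomial (single a 1 + single b 1) 4 := by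
    rw [X, X, monomial_mul_monomial, one_mul, ← map_ofNat C 4, ← smul_eq_C_mul, ← map_smul,
      smul_eq_mul, mul_one]
  have h4ne : (4 : K) ≠ 0 := by
    rw [show (4 : K) = 2 * 2 by norm_num]
    exact mul_ne_zero two_ne_zero two_ne_zero
  rw [weightedOrder_pow, h4, weightedOrder_monomial_of_ne_zero _ h4ne, map_add, weight_single,
    weight_single] at hord
  simp only [weights, true_or, or_true, if_true, smul_eq_mul, mul_one] at hord
  norm_cast at hord
  omega

variable [Fintype σ]

theorem mem_span_of_memIntClosure {K : Type*} [Field K] (hab : a ≠ b) {x : MvPowerSeries σ K}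
    (hx : MemIntClosure
      (Ideal.span (Set.range fun i => (X i : MvPowerSeries σ K) ^ exponent a b i)) x) :
    x ∈ Ideal.span (X '' ({a, b}ᶜ : Set σ) ∪ {X a ^ 2, X a * X b, X b ^ 2}) := by
  have hord := le_weightedOrder_of_memIntClosure
    (span_X_pow_le_weightedOrderIdeal _ (exponent_mul_weights a b)) hx
  refine Ideal.span_mono ?_ <| mem_span_monomial_of_forall_exists_le _ fun d hd =>
    exists_closureExponents_le hab ?_
  · rintro _ ⟨e, he, rfl⟩
    simp only [closureExponents, Finset.coe_union, Finset.coe_image, Finset.coe_compl,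
      Finset.coe_insert, Finset.coe_singleton, Set.mem_union, Set.mem_image,
      Set.mem_insert_iff, Set.mem_singleton_iff] at he
    rcases he with ⟨i, hi, rfl⟩ | rfl | rfl | rfl
    · exact Or.inl ⟨i, by simpa using hi, rfl⟩
    · simp [X_pow_eq]
    · simp [X, monomial_mul_monomial]
    · simp [X_pow_eq]
  · by_contra! hlt
    exact hd (coeff_eq_zero_of_lt_weightedOrder _ (lt_of_lt_of_le (by exact_mod_cast hlt) hord))

theorem setOf_memIntClosure {K : Type*} [Field K] (hab : a ≠ b) :
    {x | MemIntClosure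
        (Ideal.span (Set.range fun i => (X i : MvPowerSeries σ K) ^ exponent a b i)) x} =
      ↑(Ideal.span (X '' ({a, b}ᶜ : Set σ) ∪ {X a ^ 2, X a * X b, X b ^ 2}) :
        Ideal (MvPowerSeries σ K)) :=
  Set.ext fun _ => ⟨mem_span_of_memIntClosure hab, memIntClosure_of_mem_span⟩

end Ideals

theorem jacobianPS_X_pow_exponent {R : Type*} [CommRing R] {n : ℕ} {a b : Fin n} (hab : a ≠ b) :
    jacobianPS (fun i => (X i : MvPowerSeries (Fin n) R) ^ exponent a b i) = 4 * (X a * X b) := by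
  rw [jacobianPS_X_pow, Fintype.prod_eq_mul a b hab fun i hi => by simp [exponent, hi]]
  simp [exponent]
  ring

end SquaredPair

open MvPowerSeries SquaredPair in
/-- For `f = (X_1,…,X_{n-2}, X_{n-1}², X_n²)` in `k[[X_1,…,X_n]]` (char `k` = 0, `n ≥ 2`),
generating the ideal `I`: the Jacobian `J_X(f)` equals `4·X_{n-1}·X_n`, it belongs to the
integral closure of `I`, the integral closure of `I` is
`(X_1,…,X_{n-2}, X_{n-1}², X_{n-1}X_n, X_n²)`, but for no rational `θ = p/q > 1` does
`J_X(f)^q` belong to the integral closure of `I^p`. -/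
theorem stmt18 {k : Type} [Field k] [CharZero k] {n : ℕ} (hn : 2 ≤ n)
    (f : Fin n → MvPowerSeries (Fin n) k)
    (hf : f = fun i : Fin n =>
      if (i : ℕ) < n - 2 then MvPowerSeries.X i else MvPowerSeries.X i ^ 2) :
    jacobianPS f =
      4 * (MvPowerSeries.X (⟨n - 2, by omega⟩ : Fin n) *
           MvPowerSeries.X (⟨n - 1, by omega⟩ : Fin n)) ∧
    MemIntClosure (Ideal.span (Set.range f)) (jacobianPS f) ∧
    {x | MemIntClosure (Ideal.span (Set.range f)) x} =
      ↑(Ideal.span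
        ((Set.range fun i : Fin (n - 2) =>
            (MvPowerSeries.X (Fin.castLE (by omega) i) : MvPowerSeries (Fin n) k)) ∪
          {MvPowerSeries.X (⟨n - 2, by omega⟩ : Fin n) ^ 2,
           MvPowerSeries.X (⟨n - 2, by omega⟩ : Fin n) *
             MvPowerSeries.X (⟨n - 1, by omega⟩ : Fin n),
           MvPowerSeries.X (⟨n - 1, by omega⟩ : Fin n) ^ 2})) ∧
    ∀ p q : ℕ, 0 < q → q < p →
      ¬ MemIntClosure (Ideal.span (Set.range f) ^ p) (jacobianPS f ^ q) := by
  set a : Fin n := ⟨n - 2, by omega⟩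
  set b : Fin n := ⟨n - 1, by omega⟩
  have hab : a ≠ b := by simp [a, b, Fin.ext_iff]; omega
  have hlow : ∀ i : Fin n, (i : ℕ) < n - 2 ↔ i ∈ ({a, b}ᶜ : Set (Fin n)) := by
    intro i; simp [a, b, Fin.ext_iff]; omega
  have hf' : f = fun i => X i ^ exponent a b i := by
    rw [hf]; funext i
    simp only [hlow, exponent]
    by_cases hi : i = a ∨ i = b <;> simp [hi]
  have hrange : (Set.range fun i : Fin (n - 2) =>
      (X (Fin.castLE (by omega) i) : MvPowerSeries (Fin n) k)) = X '' {a, b}ᶜ := by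
    rw [Set.range_comp' X, Fin.range_castLE]
    exact congrArg _ (Set.ext hlow)
  subst hf'
  rw [hrange, setOf_memIntClosure hab, jacobianPS_X_pow_exponent hab]
  refine ⟨rfl, ?_, rfl, fun p q _ hqp => not_memIntClosure_pow hqp⟩
  exact memIntClosure_of_mem_span (Ideal.mul_mem_left _ _ (Ideal.subset_span (by simp)))
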